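/- For every real r > 2 there exists a constant C_r > 0 such that for every τ ≥ 0 and all a, b, c : ℤ² → [0,∞]: ∑_{(j,k)∈ℤ²×ℤ²} a(j) · ‖k‖ · b(k) · ‖j+k‖^{r} e^{τ‖j+k‖} · c(j+k) · | ‖j+k‖^{r} e^{τ‖j+k‖} − ‖k‖^{r} e^{τ‖k‖} | ≤ C_r [ S_{r,0}(a) · S_{r,0}(b) · S_{r,0}(c) + τ · S_{r+1/2,τ}(a) · S_{r+1/2,τ}(b) · S_{r+1/2,τ}(c) ], where S_{ρ,0} denotes the weighted ℓ²-norm with τ = 0 (no exponential weight). (This is the Fourier-coefficient form of the commutator estimate |⟨A^r e^{τA}(f·∇g), A^r e^{τA}h⟩ − ⟨f·∇A^r e^{τA}g, A^r e^{τA}h⟩| of Lemma A.4.) -/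

import Mathlib

open scoped ENNReal

noncomputable section

/-- Euclidean norm of a lattice point `k ∈ ℤ²` viewed as a vector in `ℝ²`. -/
def nz (k : ℤ × ℤ) : ℝ := Real.sqrt ((k.1 : ℝ) ^ 2 + (k.2 : ℝ) ^ 2)

/-- The weighted ℓ²-norm `S_{ρ,τ}(a) = (∑_k ‖k‖^{2ρ} e^{2τ‖k‖} a(k)²)^{1/2}`. -/
def S (ρ τ : ℝ) (a : ℤ × ℤ → ℝ≥0∞) : ℝ≥0∞ :=
  (∑' k : ℤ × ℤ, ENNReal.ofReal (nz k ^ (2 * ρ) * Real.exp (2 * τ * nz k)) * (a k) ^ 2)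
    ^ ((1 : ℝ) / 2)


/-!
Write `φ(u) = u ^ r * exp (τ u)` and, for a pair `(j, k)`, `x = ‖j + k‖`, `y = ‖k‖`, `z = ‖j‖`,
so that `|x - y| ≤ z`. By the mean value theorem `|φ x - φ y| ≤ z φ'(max x y)`. Nonzero lattice
points have norm at least `1`, so `max x y ≤ 2 √(x y z)`, and `e ^ s ≤ 1 + s e ^ s` removes the
exponential from the `τ`-free part; hence `y φ(x) |φ x - φ y|` is at most a constant times
`z y^r x^r + z^r y x^r`
`+ τ (z^{3/2} y^{r+1/2} x^{r+1/2} + z^{r+1/2} y^{3/2} x^{r+1/2}) e^{τ(x+y+z)}`.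
Each of the four resulting sums `∑ F(j) G(k) H(j+k)` is at most `‖F‖₁ ‖G‖₂ ‖H‖₂`, and the `ℓ¹` norm
of the low-order factor is bounded by Cauchy–Schwarz against `∑ ‖k‖^{2-2r}`, finite because `r > 2`.
-/

def latticeToComplex : ℤ × ℤ →+ ℂ where
  toFun k := ⟨k.1, k.2⟩
  map_zero' := by simp [Complex.ext_iff]
  map_add' j k := by simp [Complex.ext_iff]

lemma nz_eq_norm (k : ℤ × ℤ) : nz k = ‖latticeToComplex k‖ := by
  rw [Complex.norm_def, Complex.normSq_apply, nz]
  simp [latticeToComplex, sq]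

lemma nz_nonneg (k : ℤ × ℤ) : 0 ≤ nz k := Real.sqrt_nonneg _

@[simp] lemma nz_zero : nz 0 = 0 := by simp [nz]

lemma abs_nz_add_sub_le (j k : ℤ × ℤ) : |nz (j + k) - nz k| ≤ nz j := by
  simpa only [nz_eq_norm, map_add, add_sub_cancel_right] using
    abs_norm_sub_norm_le (latticeToComplex j + latticeToComplex k) (latticeToComplex k)

lemma abs_fst_le_nz (k : ℤ × ℤ) : |(k.1 : ℝ)| ≤ nz k :=
  Real.abs_le_sqrt (le_add_of_nonneg_right (sq_nonneg _))

lemma abs_snd_le_nz (k : ℤ × ℤ) : |(k.2 : ℝ)| ≤ nz k :=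
  Real.abs_le_sqrt (le_add_of_nonneg_left (sq_nonneg _))

lemma one_le_nz {k : ℤ × ℤ} (hk : k ≠ 0) : 1 ≤ nz k := by
  have one_le_abs {n : ℤ} (hn : n ≠ 0) : (1 : ℝ) ≤ |(n : ℝ)| := by
    exact_mod_cast Int.one_le_abs hn
  by_cases h₁ : k.1 = 0
  · exact (one_le_abs fun h₂ => hk (Prod.ext h₁ h₂)).trans (abs_snd_le_nz k)
  · exact (one_le_abs h₁).trans (abs_fst_le_nz k)

lemma tsum_ofReal_nz_rpow_ne_top {q : ℝ} (hq : q < -2) :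
    ∑' k : ℤ × ℤ, ENNReal.ofReal (nz k ^ q) ≠ ⊤ := by
  set e := (finTwoArrowEquiv ℤ).symm
  have hsum : Summable fun k => ‖e k‖ ^ q := by
    have := (EisensteinSeries.summable_one_div_norm_rpow (k := -q) (by linarith)).comp_injective
      e.injective
    simpa only [neg_neg, Function.comp_def] using this
  have hle (k : ℤ × ℤ) : nz k ^ q ≤ ‖e k‖ ^ q := by
    by_cases hk : k = 0
    · rw [hk, nz_zero, Real.zero_rpow (by linarith)]
      positivity
    have he : ‖e k‖ ≤ nz k := by
      refine (pi_norm_le_iff_of_nonneg (nz_nonneg k)).2 fun i => ?_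
      fin_cases i <;> simp [e, Int.norm_eq_abs, abs_fst_le_nz, abs_snd_le_nz]
    have he0 : 0 < ‖e k‖ :=
      norm_pos_iff.2 fun h => hk (e.injective (h.trans (funext fun i => by fin_cases i <;> rfl)))
    exact Real.rpow_le_rpow_of_nonpos he0 he (by linarith)
  refine ne_top_of_le_ne_top ?_ (ENNReal.tsum_le_tsum fun k => ENNReal.ofReal_le_ofReal (hle k))
  rw [← ENNReal.ofReal_tsum_of_nonneg (fun _ => by positivity) hsum]
  exact ENNReal.ofReal_ne_top

section ConvolutionSums

variable {α : Type*}

theorem ENNReal.tsum_mul_le_L2_mul_L2 (f g : α → ℝ≥0∞) :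
    ∑' x, f x * g x ≤ (∑' x, f x ^ 2) ^ (1 / 2 : ℝ) * (∑' x, g x ^ 2) ^ (1 / 2 : ℝ) := by
  refine ENNReal.summable.tsum_le_of_sum_le fun s => ?_
  refine (ENNReal.inner_le_Lp_mul_Lq s f g Real.HolderConjugate.two_two).trans ?_
  simp only [ENNReal.rpow_two]
  gcongr <;> exact ENNReal.sum_le_tsum s

theorem tsum_mul_mul_add_le [AddGroup α] (F G H : α → ℝ≥0∞) :
    ∑' p : α × α, F p.1 * G p.2 * H (p.1 + p.2)
      ≤ (∑' x, F x) * ((∑' x, G x ^ 2) ^ (1 / 2 : ℝ) * (∑' x, H x ^ 2) ^ (1 / 2 : ℝ)) := by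
  rw [ENNReal.tsum_prod (f := fun j k => F j * G k * H (j + k)), ← ENNReal.tsum_mul_right]
  refine ENNReal.tsum_le_tsum fun j => ?_
  simp only [mul_assoc, ENNReal.tsum_mul_left]
  gcongr
  refine (ENNReal.tsum_mul_le_L2_mul_L2 G (fun k => H (j + k))).trans_eq ?_
  exact congrArg (_ * · ^ (1 / 2 : ℝ)) ((Equiv.addLeft j).tsum_eq fun m => H m ^ 2)

theorem tsum_mul_mul_add_le' [AddCommGroup α] (F G H : α → ℝ≥0∞) :
    ∑' p : α × α, F p.1 * G p.2 * H (p.1 + p.2)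
      ≤ (∑' x, G x) * ((∑' x, F x ^ 2) ^ (1 / 2 : ℝ) * (∑' x, H x ^ 2) ^ (1 / 2 : ℝ)) := by
  rw [← (Equiv.prodComm α α).tsum_eq]
  simpa only [Equiv.prodComm_apply, Prod.fst_swap, Prod.snd_swap, mul_comm (F _), add_comm]
    using tsum_mul_mul_add_le G F H

end ConvolutionSums

def expWeight (s t u : ℝ) : ℝ := u ^ s * Real.exp (t * u)

lemma expWeight_nonneg (s t : ℝ) {u : ℝ} (hu : 0 ≤ u) : 0 ≤ expWeight s t u := by
  unfold expWeight; positivity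

lemma hasDerivAt_expWeight {s : ℝ} (hs : 1 ≤ s) (t u : ℝ) :
    HasDerivAt (expWeight s t) ((s * u ^ (s - 1) + t * u ^ s) * Real.exp (t * u)) u := by
  refine ((Real.hasDerivAt_rpow_const (Or.inr hs)).mul
    ((hasDerivAt_id u).const_mul t).exp).congr_deriv ?_
  simp only [id, mul_one]
  ring

lemma abs_expWeight_sub_le {s t x y : ℝ} (hs : 1 ≤ s) (ht : 0 ≤ t) (hx : 0 ≤ x) (hy : 0 ≤ y) :
    |expWeight s t x - expWeight s t y|
      ≤ |x - y| * ((s * max x y ^ (s - 1) + t * max x y ^ s) * Real.exp (t * max x y)) := by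
  wlog hyx : y ≤ x generalizing x y
  · rw [abs_sub_comm, abs_sub_comm x, max_comm]
    exact this hy hx (le_of_not_ge hyx)
  rw [max_eq_left hyx, abs_of_nonneg (sub_nonneg.2 hyx), mul_comm (x - y)]
  have hderiv (u : ℝ) (_ : u ∈ Set.Icc y x) :=
    (hasDerivAt_expWeight hs t u).hasDerivWithinAt (s := Set.Icc y x)
  refine norm_image_sub_le_of_norm_deriv_le_segment' hderiv (fun u hu => ?_) x
    (Set.right_mem_Icc.2 hyx)
  have hu0 : 0 ≤ u := hy.trans hu.1
  rw [Real.norm_of_nonneg (by positivity)]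
  have hux : u ≤ x := hu.2.le
  gcongr

lemma exp_le_one_add_mul_exp (s : ℝ) : Real.exp s ≤ 1 + s * Real.exp s := by
  have h := Real.add_one_le_exp (-s)
  have hmul : Real.exp (-s) * Real.exp s = 1 := by
    rw [← Real.exp_add, neg_add_cancel, Real.exp_zero]
  nlinarith [Real.exp_pos s]

lemma rpow_le_two_rpow_mul_add {p u v w : ℝ} (hp : 0 ≤ p) (hu : 0 ≤ u) (hv : 0 ≤ v) (hw : 0 ≤ w)
    (h : u ≤ v + w) : u ^ p ≤ 2 ^ p * (v ^ p + w ^ p) := by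
  wlog hvw : v ≤ w generalizing v w
  · rw [add_comm] at h ⊢
    exact this hw hv h (le_of_not_ge hvw)
  calc u ^ p ≤ (2 * w) ^ p := Real.rpow_le_rpow hu (by linarith) hp
    _ = 2 ^ p * w ^ p := Real.mul_rpow zero_le_two hw
    _ ≤ 2 ^ p * (v ^ p + w ^ p) := by gcongr; exact le_add_of_nonneg_left (by positivity)

section Pointwise

variable {r τ x y z : ℝ}

lemma max_le_two_mul_sqrt (hx : 1 ≤ x) (hy : 1 ≤ y) (hz : 1 ≤ z) (hxy : |x - y| ≤ z) :
    max x y ≤ 2 * √(x * y * z) := by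
  obtain ⟨hxyz, hyxz⟩ := abs_sub_le_iff.1 hxy
  have hyz : y + z ≤ 2 * (y * z) := by nlinarith
  have hxz : x + z ≤ 2 * (x * z) := by nlinarith
  refine (pow_le_pow_iff_left₀ (by positivity) (by positivity) two_ne_zero).1 ?_
  rw [mul_pow, Real.sq_sqrt (by positivity)]
  rcases max_cases x y with ⟨h, -⟩ | ⟨h, -⟩ <;> rw [h] <;> nlinarith

lemma add_mul_exp_mul_exp_le (hr : 0 ≤ r) (hτ : 0 ≤ τ) (hx : 0 ≤ x) {m L : ℝ} (hxm : x ≤ m)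
    (hmL : x + m ≤ L) :
    (r + τ * m) * (Real.exp (τ * x) * Real.exp (τ * m))
      ≤ (2 * r + 1) * (1 + τ * m * Real.exp (τ * L)) := by
  rw [← Real.exp_add, ← mul_add]
  have hτm : 0 ≤ τ * m := mul_nonneg hτ (hx.trans hxm)
  have he : Real.exp (τ * (x + m)) ≤ Real.exp (τ * L) :=
    Real.exp_le_exp.2 (mul_le_mul_of_nonneg_left hmL hτ)
  have he' : Real.exp (τ * (x + m)) ≤ 1 + 2 * (τ * m) * Real.exp (τ * L) :=
    (exp_le_one_add_mul_exp _).trans (add_le_add le_rfl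
      (mul_le_mul (by nlinarith) he (Real.exp_pos _).le (by positivity)))
  nlinarith [mul_le_mul_of_nonneg_left he' hr, mul_le_mul_of_nonneg_left he hτm]

lemma mul_expWeight_mul_abs_sub_le (hr : 1 ≤ r) (hτ : 0 ≤ τ) (hx : 1 ≤ x) (hy : 1 ≤ y)
    (hz : 1 ≤ z) (hxy : |x - y| ≤ z) :
    y * expWeight r τ x * |expWeight r τ x - expWeight r τ y|
      ≤ (2 * r + 1) * 2 ^ r * (x ^ r * (y * z * (y ^ (r - 1) + z ^ (r - 1)))
          * (1 + τ * √(x * y * z) * Real.exp (τ * (x + y + z)))) := by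
  set m := max x y
  set E := Real.exp (τ * (x + y + z))
  have hm0 : 0 < m := by positivity
  obtain ⟨hxyz, hyxz⟩ := abs_sub_le_iff.1 hxy
  have hmyz : m ≤ y + z := max_le (by linarith) (by linarith)
  have hdiff : |expWeight r τ x - expWeight r τ y|
      ≤ z * ((r * m ^ (r - 1) + τ * m ^ r) * Real.exp (τ * m)) :=
    (abs_expWeight_sub_le hr hτ (by positivity) (by positivity)).trans
      (mul_le_mul_of_nonneg_right hxy (by positivity))
  have hexp : (r + τ * m) * (Real.exp (τ * x) * Real.exp (τ * m)) ≤ (2 * r + 1) * (1 + τ * m * E) :=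
    add_mul_exp_mul_exp_le (by positivity) hτ (by positivity) (le_max_left x y) (by linarith)
  have hmpow : m ^ (r - 1) ≤ 2 ^ (r - 1) * (y ^ (r - 1) + z ^ (r - 1)) :=
    rpow_le_two_rpow_mul_add (by linarith) hm0.le (by positivity) (by positivity) hmyz
  have hmsqrt := max_le_two_mul_sqrt hx hy hz hxy
  calc y * expWeight r τ x * |expWeight r τ x - expWeight r τ y|
      ≤ y * expWeight r τ x * (z * ((r * m ^ (r - 1) + τ * m ^ r) * Real.exp (τ * m))) := by
        gcongr
        exact mul_nonneg (by positivity) (expWeight_nonneg _ _ (by positivity))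
    _ = x ^ r * (y * z) * m ^ (r - 1) * ((r + τ * m) * (Real.exp (τ * x) * Real.exp (τ * m))) := by
        rw [expWeight, Real.rpow_sub_one hm0.ne']
        field_simp
    _ ≤ x ^ r * (y * z) * (2 ^ (r - 1) * (y ^ (r - 1) + z ^ (r - 1)))
          * ((2 * r + 1) * (1 + τ * (2 * √(x * y * z)) * E)) := by
        gcongr x ^ r * (y * z) * ?_ * ?_
        exact hexp.trans (by gcongr)
    _ ≤ _ := by
        have hA : 0 ≤ (2 * r + 1) * 2 ^ r * (x ^ r * (y * z * (y ^ (r - 1) + z ^ (r - 1)))) := by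
          positivity
        rw [Real.rpow_sub_one two_ne_zero]
        linarith

lemma mul_expWeight_mul_abs_sub_le_sum (hr : 1 ≤ r) (hτ : 0 ≤ τ) (hx : 1 ≤ x) (hy : 1 ≤ y)
    (hz : 1 ≤ z) (hxy : |x - y| ≤ z) :
    y * expWeight r τ x * |expWeight r τ x - expWeight r τ y|
      ≤ (2 * r + 1) * 2 ^ r *
        (expWeight 1 0 z * expWeight r 0 y * expWeight r 0 x
          + expWeight r 0 z * expWeight 1 0 y * expWeight r 0 x
          + τ * (expWeight (3 / 2) τ z * expWeight (r + 1 / 2) τ y * expWeight (r + 1 / 2) τ x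
            + expWeight (r + 1 / 2) τ z * expWeight (3 / 2) τ y * expWeight (r + 1 / 2) τ x)) := by
  refine (mul_expWeight_mul_abs_sub_le hr hτ hx hy hz hxy).trans_eq ?_
  have rpow_add_half {u : ℝ} (hu : 0 < u) (s : ℝ) : u ^ (s + 1 / 2) = u ^ s * √u := by
    rw [Real.rpow_add hu, Real.sqrt_eq_rpow]
  have rpow_three_halves {u : ℝ} (hu : 0 < u) : u ^ (3 / 2 : ℝ) = u * √u := by
    rw [show (3 / 2 : ℝ) = 1 + 1 / 2 by norm_num, rpow_add_half hu, Real.rpow_one]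
  have rpow_eq_mul_rpow_sub_one {u : ℝ} (hu : 0 < u) : u ^ r = u * u ^ (r - 1) := by
    rw [Real.rpow_sub_one hu.ne']
    field_simp
  have hx0 : 0 < x := by linarith
  have hy0 : 0 < y := by linarith
  have hz0 : 0 < z := by linarith
  simp only [expWeight, Real.rpow_one, zero_mul, Real.exp_zero, mul_one, rpow_add_half hx0,
    rpow_add_half hy0, rpow_add_half hz0, rpow_three_halves hy0, rpow_three_halves hz0,
    Real.sqrt_mul hx0.le, Real.sqrt_mul (mul_pos hx0 hy0).le, mul_add τ, Real.exp_add]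
  rw [rpow_eq_mul_rpow_sub_one hy0, rpow_eq_mul_rpow_sub_one hz0]
  ring

end Pointwise

section Weighted

def weighted (s t : ℝ) (a : ℤ × ℤ → ℝ≥0∞) (k : ℤ × ℤ) : ℝ≥0∞ :=
  ENNReal.ofReal (expWeight s t (nz k)) * a k

def latticeConst (r : ℝ) : ℝ≥0∞ :=
  (∑' k : ℤ × ℤ, ENNReal.ofReal (nz k ^ (2 - 2 * r))) ^ (1 / 2 : ℝ)

lemma expWeight_sq (s t : ℝ) {u : ℝ} (hu : 0 ≤ u) :
    expWeight s t u ^ 2 = expWeight (2 * s) (2 * t) u := by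
  rw [expWeight, expWeight, mul_pow, ← Real.rpow_mul_natCast hu, ← Real.exp_nat_mul]
  push_cast
  ring_nf

lemma tsum_weighted_sq_rpow (s t : ℝ) (a : ℤ × ℤ → ℝ≥0∞) :
    (∑' k, weighted s t a k ^ 2) ^ (1 / 2 : ℝ) = S s t a := by
  simp only [S, weighted, mul_pow, ← ENNReal.ofReal_pow (expWeight_nonneg _ _ (nz_nonneg _)),
    expWeight_sq _ _ (nz_nonneg _)]
  rfl

variable {r γ s : ℝ}

-- At `k = 0` the left side contains `0 ^ γ`, which is `1` rather than `0` when `γ = 0`.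
lemma tsum_weighted_le (hγ : γ ≠ 0) (hs : γ + (r - 1) = s) (t : ℝ) (a : ℤ × ℤ → ℝ≥0∞) :
    ∑' k, weighted γ t a k ≤ latticeConst r * S s t a := by
  have hsplit (k : ℤ × ℤ) :
      weighted γ t a k = ENNReal.ofReal (nz k ^ (1 - r)) * weighted s t a k := by
    rw [weighted, weighted, expWeight, expWeight, ← mul_assoc,
      ← ENNReal.ofReal_mul (Real.rpow_nonneg (nz_nonneg k) _),
      ← mul_assoc, ← Real.rpow_add' (nz_nonneg k) (by contrapose! hγ; linarith)]
    congr 4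
    linarith
  have hsq (k : ℤ × ℤ) :
      ENNReal.ofReal (nz k ^ (1 - r)) ^ 2 = ENNReal.ofReal (nz k ^ (2 - 2 * r)) := by
    rw [← ENNReal.ofReal_pow (Real.rpow_nonneg (nz_nonneg k) _),
      ← Real.rpow_mul_natCast (nz_nonneg k)]
    ring_nf
  rw [tsum_congr hsplit, ← tsum_weighted_sq_rpow, latticeConst]
  simpa only [hsq] using
    ENNReal.tsum_mul_le_L2_mul_L2 (fun k => ENNReal.ofReal (nz k ^ (1 - r))) (weighted s t a)

lemma tsum_weighted_mul_mul_add_le (hγ : γ ≠ 0) (hs : γ + (r - 1) = s) (t : ℝ)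
    (a b c : ℤ × ℤ → ℝ≥0∞) :
    ∑' p : (ℤ × ℤ) × (ℤ × ℤ), weighted γ t a p.1 * weighted s t b p.2 * weighted s t c (p.1 + p.2)
      ≤ latticeConst r * (S s t a * S s t b * S s t c) := by
  refine (tsum_mul_mul_add_le _ _ _).trans ?_
  rw [tsum_weighted_sq_rpow, tsum_weighted_sq_rpow]
  calc (∑' k, weighted γ t a k) * (S s t b * S s t c)
      ≤ latticeConst r * S s t a * (S s t b * S s t c) := by
        gcongr
        exact tsum_weighted_le hγ hs t a
    _ = _ := by ring

lemma tsum_weighted_mul_mul_add_le' (hγ : γ ≠ 0) (hs : γ + (r - 1) = s) (t : ℝ)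
    (a b c : ℤ × ℤ → ℝ≥0∞) :
    ∑' p : (ℤ × ℤ) × (ℤ × ℤ), weighted s t a p.1 * weighted γ t b p.2 * weighted s t c (p.1 + p.2)
      ≤ latticeConst r * (S s t a * S s t b * S s t c) := by
  refine (tsum_mul_mul_add_le' _ _ _).trans ?_
  rw [tsum_weighted_sq_rpow, tsum_weighted_sq_rpow]
  calc (∑' k, weighted γ t b k) * (S s t a * S s t c)
      ≤ latticeConst r * S s t b * (S s t a * S s t c) := by
        gcongr
        exact tsum_weighted_le hγ hs t b
    _ = _ := by ring

lemma latticeConst_ne_top (hr : 2 < r) : latticeConst r ≠ ⊤ :=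
  ENNReal.rpow_ne_top_of_nonneg (by norm_num) (tsum_ofReal_nz_rpow_ne_top (by linarith))

end Weighted

def commutatorMajorant (r τ : ℝ) (a b c : ℤ × ℤ → ℝ≥0∞) (j k : ℤ × ℤ) : ℝ≥0∞ :=
  weighted 1 0 a j * weighted r 0 b k * weighted r 0 c (j + k)
    + weighted r 0 a j * weighted 1 0 b k * weighted r 0 c (j + k)
    + ENNReal.ofReal τ *
      (weighted (3 / 2) τ a j * weighted (r + 1 / 2) τ b k * weighted (r + 1 / 2) τ c (j + k)
        + weighted (r + 1 / 2) τ a j * weighted (3 / 2) τ b k * weighted (r + 1 / 2) τ c (j + k))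

lemma commutator_summand_le {r τ : ℝ} (hr : 1 ≤ r) (hτ : 0 ≤ τ) (a b c : ℤ × ℤ → ℝ≥0∞)
    (j k : ℤ × ℤ) :
    a j * ENNReal.ofReal (nz k) * b k * ENNReal.ofReal (expWeight r τ (nz (j + k))) * c (j + k)
        * ENNReal.ofReal |expWeight r τ (nz (j + k)) - expWeight r τ (nz k)|
      ≤ ENNReal.ofReal ((2 * r + 1) * 2 ^ r) * commutatorMajorant r τ a b c j k := by
  by_cases hj : j = 0
  · simp [hj]
  by_cases hk : k = 0
  · simp [hk]
  by_cases hjk : j + k = 0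
  · simp [hjk, expWeight, Real.zero_rpow (by linarith : r ≠ 0)]
  have hx := one_le_nz hjk
  have hy := one_le_nz hk
  have hz := one_le_nz hj
  have key := mul_expWeight_mul_abs_sub_le_sum hr hτ hx hy hz (abs_nz_add_sub_le j k)
  simp only [commutatorMajorant, weighted]
  calc _ = ENNReal.ofReal (nz k * expWeight r τ (nz (j + k))
          * |expWeight r τ (nz (j + k)) - expWeight r τ (nz k)|) * (a j * b k * c (j + k)) := by
        simp (disch := ((try simp only [expWeight]); positivity)) only [ENNReal.ofReal_mul]
        ring
    _ ≤ ENNReal.ofReal _ * (a j * b k * c (j + k)) :=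
        mul_le_mul_of_nonneg_right (ENNReal.ofReal_le_ofReal key) zero_le
    _ = _ := by
        simp (disch := ((try simp only [expWeight]); positivity)) only
          [ENNReal.ofReal_mul, ENNReal.ofReal_add]
        ring

lemma tsum_commutatorMajorant_le (r τ : ℝ) (a b c : ℤ × ℤ → ℝ≥0∞) :
    ∑' p : (ℤ × ℤ) × (ℤ × ℤ), commutatorMajorant r τ a b c p.1 p.2
      ≤ 2 * latticeConst r * (S r 0 a * S r 0 b * S r 0 c
        + ENNReal.ofReal τ * S (r + 1 / 2) τ a * S (r + 1 / 2) τ b * S (r + 1 / 2) τ c) := by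
  have h₁ : (1 : ℝ) + (r - 1) = r := by ring
  have h₂ : (3 / 2 : ℝ) + (r - 1) = r + 1 / 2 := by ring
  simp only [commutatorMajorant, ENNReal.tsum_add, ENNReal.tsum_mul_left]
  calc _ ≤ latticeConst r * (S r 0 a * S r 0 b * S r 0 c)
          + latticeConst r * (S r 0 a * S r 0 b * S r 0 c)
          + ENNReal.ofReal τ *
            (latticeConst r * (S (r + 1 / 2) τ a * S (r + 1 / 2) τ b * S (r + 1 / 2) τ c)
              + latticeConst r * (S (r + 1 / 2) τ a * S (r + 1 / 2) τ b * S (r + 1 / 2) τ c)) := by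
        gcongr
        · exact tsum_weighted_mul_mul_add_le one_ne_zero h₁ 0 a b c
        · exact tsum_weighted_mul_mul_add_le' one_ne_zero h₁ 0 a b c
        · exact tsum_weighted_mul_mul_add_le (by norm_num) h₂ τ a b c
        · exact tsum_weighted_mul_mul_add_le' (by norm_num) h₂ τ a b c
    _ = _ := by ring

/-- Fourier-coefficient form of the commutator estimate
`|⟨A^r e^{τA}(f·∇g), A^r e^{τA}h⟩ − ⟨f·∇A^r e^{τA}g, A^r e^{τA}h⟩|` of Lemma A.4. -/
theorem commutator_transport_estimate :
    ∀ r : ℝ, 2 < r → ∃ C : ℝ, 0 < C ∧ ∀ τ : ℝ, 0 ≤ τ → ∀ a b c : ℤ × ℤ → ℝ≥0∞,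
      (∑' p : (ℤ × ℤ) × (ℤ × ℤ),
          a p.1 * ENNReal.ofReal (nz p.2) * b p.2
            * ENNReal.ofReal (nz (p.1 + p.2) ^ r * Real.exp (τ * nz (p.1 + p.2)))
            * c (p.1 + p.2)
            * ENNReal.ofReal |nz (p.1 + p.2) ^ r * Real.exp (τ * nz (p.1 + p.2))
                - nz p.2 ^ r * Real.exp (τ * nz p.2)|)
        ≤ ENNReal.ofReal C *
            (S r 0 a * S r 0 b * S r 0 c
              + ENNReal.ofReal τ * S (r + 1 / 2) τ a * S (r + 1 / 2) τ b
                  * S (r + 1 / 2) τ c) := by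
  intro r hr
  set C₀ := (2 * r + 1) * 2 ^ r
  set K := (latticeConst r).toReal + 1
  have hK : latticeConst r ≤ ENNReal.ofReal K :=
    (ENNReal.le_ofReal_iff_toReal_le (latticeConst_ne_top hr) (by positivity)).2 (by linarith)
  refine ⟨2 * C₀ * K, by positivity, fun τ hτ a b c => ?_⟩
  calc _ ≤ ∑' p : (ℤ × ℤ) × (ℤ × ℤ), ENNReal.ofReal C₀ * commutatorMajorant r τ a b c p.1 p.2 :=
        ENNReal.tsum_le_tsum fun p => commutator_summand_le (by linarith) hτ a b c p.1 p.2
    _ ≤ ENNReal.ofReal C₀ * (2 * ENNReal.ofReal K * (S r 0 a * S r 0 b * S r 0 c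
          + ENNReal.ofReal τ * S (r + 1 / 2) τ a * S (r + 1 / 2) τ b * S (r + 1 / 2) τ c)) := by
        rw [ENNReal.tsum_mul_left]
        gcongr
        exact (tsum_commutatorMajorant_le r τ a b c).trans (by gcongr)
    _ = _ := by
        rw [ENNReal.ofReal_mul (p := 2 * C₀) (by positivity), ENNReal.ofReal_mul zero_le_two,
          ENNReal.ofReal_ofNat]
        ring

end
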